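/- For integers m ≥ 1 and n ≥ 2, let Q(m,n) be the graph obtained from K_m by identifying each vertex of K_m with a vertex of its own disjoint copy of K_n. Then the edge Mostar index of Q(m,n) equals (m(n−1)(m−1)/2)·(n² − n + m). -/

import Mathlib

open Finset

section MostarDefs

variable {V : Type*}

/-- Number of vertices of `G` strictly closer to `u` than to `v`. -/
noncomputable def closerCount (G : SimpleGraph V) (u v : V) : ℕ :=
  Nat.card {w : V // G.dist w u < G.dist w v}

/-- Contribution `|n_u - n_v|` of an edge, as a symmetric function on `Sym2 V`. -/
noncomputable def mostarTerm (G : SimpleGraph V) : Sym2 V → ℕ :=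
  Sym2.lift ⟨fun u v => ((closerCount G u v : ℤ) - closerCount G v u).natAbs,
    fun u v => by dsimp only; omega⟩

/-- The Mostar index of a finite graph. -/
noncomputable def mostar (G : SimpleGraph V) [Finite V] : ℕ :=
  letI := Fintype.ofFinite V
  letI := Classical.decEq V
  letI := Classical.decRel G.Adj
  ∑ e ∈ G.edgeFinset, mostarTerm G e

/-- Distance from a vertex `w` to an edge, as min over the endpoints. -/
noncomputable def vertexEdgeDist (G : SimpleGraph V) (w : V) : Sym2 V → ℕ :=
  Sym2.lift ⟨fun x y => min (G.dist x w) (G.dist y w), fun _ _ => min_comm _ _⟩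

/-- Number of edges of `G` strictly closer to `u` than to `v`. -/
noncomputable def edgeCloserCount (G : SimpleGraph V) (u v : V) : ℕ :=
  Nat.card {e : Sym2 V // e ∈ G.edgeSet ∧ vertexEdgeDist G u e < vertexEdgeDist G v e}

/-- Contribution `|m_u - m_v|` of an edge, as a symmetric function on `Sym2 V`. -/
noncomputable def emostarTerm (G : SimpleGraph V) : Sym2 V → ℕ :=
  Sym2.lift ⟨fun u v => ((edgeCloserCount G u v : ℤ) - edgeCloserCount G v u).natAbs,
    fun u v => by dsimp only; omega⟩

/-- The edge Mostar index of a finite graph. -/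
noncomputable def emostar (G : SimpleGraph V) [Finite V] : ℕ :=
  letI := Fintype.ofFinite V
  letI := Classical.decEq V
  letI := Classical.decRel G.Adj
  ∑ e ∈ G.edgeFinset, emostarTerm G e

end MostarDefs

/-- `Q(m,n)`: the complete graph `K_m`, each of whose vertices is identified with a
vertex of its own disjoint copy of `K_n`.  Vertex `(i, 0)` is the `i`-th hub vertex. -/
def Qgraph (m n : ℕ) : SimpleGraph (Fin m × Fin n) where
  Adj p q := (p.1 = q.1 ∧ p.2 ≠ q.2) ∨ (p.2.val = 0 ∧ q.2.val = 0 ∧ p.1 ≠ q.1)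
  symm := by
    constructor
    rintro p q (⟨h1, h2⟩ | ⟨h1, h2, h3⟩)
    · exact Or.inl ⟨h1.symm, h2.symm⟩
    · exact Or.inr ⟨h2, h1, h3.symm⟩
  loopless := by constructor; rintro p (⟨_, h⟩ | ⟨_, _, h⟩) <;> exact h rfl

/-!
Two kinds of automorphisms of `Q(m,n)` — permuting the copies, and permuting the non-hub
positions of all copies simultaneously — swap the endpoints of every hub edge `(i,0)(j,0)` and
of every edge `(i,b)(i,c)` between non-hub vertices, so these edges contribute nothing. For a
spoke `(i,0)(i,b)` every vertex outside copy `i` is one step farther from the leaf `(i,b)` than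
from the hub `(i,0)`, while the other vertices of copy `i` are adjacent to both. Hence the
`n - 2` other edges at `(i,b)` are closer to the leaf, and the `n - 2` other spokes at `(i,0)`
together with all `C(m,2) + (m-1) C(n,2)` edges outside copy `i` are closer to the hub. Summing
`C(m,2) + (m-1) C(n,2)` over the `m (n-1)` spokes gives the formula.
-/

def Equiv.sym2Map {α β : Type*} (e : α ≃ β) : Sym2 α ≃ Sym2 β where
  toFun := Sym2.map e
  invFun := Sym2.map e.symm
  left_inv z := by simp [Sym2.map_map]
  right_inv z := by simp [Sym2.map_map]

def Sym2.star {α : Type*} [DecidableEq α] (x : α) (s : Finset α) : Finset (Sym2 α) :=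
  s.image fun y => s(x, y)

namespace Sym2

variable {α : Type*} [DecidableEq α]

lemma mk_mem_star {x y z : α} {s : Finset α} :
    s(y, z) ∈ Sym2.star x s ↔ (y = x ∧ z ∈ s) ∨ (z = x ∧ y ∈ s) := by
  simp only [Sym2.star, mem_image, Sym2.eq_iff]
  grind

lemma card_star (x : α) (s : Finset α) : #(Sym2.star x s) = #s :=
  card_image_of_injective _ fun _ _ h => Sym2.congr_right.mp h

end Sym2

namespace SimpleGraph

variable {V W : Type*} {G : SimpleGraph V} {G' : SimpleGraph W}

lemma Hom.edist_map_le (f : G →g G') (u v : V) : G'.edist (f u) (f v) ≤ G.edist u v :=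
  le_iInf fun p => (edist_le (p.map f)).trans_eq (by rw [Walk.length_map])

lemma Iso.edist_eq (φ : G ≃g G') (u v : V) : G'.edist (φ u) (φ v) = G.edist u v := by
  refine le_antisymm (φ.toHom.edist_map_le u v) ?_
  simpa using φ.symm.toHom.edist_map_le (φ u) (φ v)

lemma Iso.dist_eq (φ : G ≃g G') (u v : V) : G'.dist (φ u) (φ v) = G.dist u v := by
  rw [dist, dist, φ.edist_eq]

lemma Walk.le_length_add_of_le_add_one {f : V → ℕ} (hf : ∀ x y, G.Adj x y → f x ≤ f y + 1)
    {x q : V} (p : G.Walk x q) : f x ≤ p.length + f q := by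
  induction p with
  | nil => simp
  | cons h _ ih => have := hf _ _ h; simp only [Walk.length_cons]; omega

lemma exists_walk_length_le_of_descent {q : V} (f : V → ℕ)
    (hdesc : ∀ x, x ≠ q → ∃ y, G.Adj x y ∧ f y < f x) (x : V) :
    ∃ p : G.Walk x q, p.length ≤ f x := by
  induction hx : f x using Nat.strong_induction_on generalizing x with
  | _ k ih =>
    by_cases hxq : x = q
    · exact ⟨hxq ▸ Walk.nil, by subst hxq; simp⟩
    obtain ⟨y, hxy, hy⟩ := hdesc x hxq
    obtain ⟨p, hp⟩ := ih (f y) (hx ▸ hy) y rfl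
    exact ⟨Walk.cons hxy p, by simp only [Walk.length_cons]; omega⟩

lemma dist_eq_of_descent {q : V} (f : V → ℕ) (hq : f q = 0)
    (hf : ∀ x y, G.Adj x y → f x ≤ f y + 1)
    (hdesc : ∀ x, x ≠ q → ∃ y, G.Adj x y ∧ f y < f x) (x : V) : G.dist x q = f x := by
  obtain ⟨p, hp⟩ := exists_walk_length_le_of_descent f hdesc x
  obtain ⟨r, hr⟩ := p.reachable.exists_walk_length_eq_dist
  have := r.le_length_add_of_le_add_one hf
  have := dist_le p
  omega

lemma Iso.vertexEdgeDist_map (φ : G ≃g G') (w : V) (e : Sym2 V) :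
    vertexEdgeDist G' (φ w) (e.map φ) = vertexEdgeDist G w e := by
  induction e using Sym2.ind with
  | _ x y => simp [vertexEdgeDist, φ.dist_eq]

lemma Iso.edgeCloserCount_eq (φ : G ≃g G') (u v : V) :
    edgeCloserCount G' (φ u) (φ v) = edgeCloserCount G u v := by
  refine (Nat.card_congr (Equiv.subtypeEquiv φ.toEquiv.sym2Map fun e => ?_)).symm
  change _ ↔ e.map φ ∈ G'.edgeSet ∧
    vertexEdgeDist G' (φ u) (e.map φ) < vertexEdgeDist G' (φ v) (e.map φ)
  rw [φ.map_mem_edgeSet_iff, φ.vertexEdgeDist_map, φ.vertexEdgeDist_map]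

lemma emostarTerm_eq_zero_of_iso_swap (φ : G ≃g G) {u v : V} (hu : φ u = v) (hv : φ v = u) :
    emostarTerm G s(u, v) = 0 := by
  have h := φ.edgeCloserCount_eq u v
  rw [hu, hv] at h
  simp [emostarTerm, h]

lemma edgeCloserCount_eq_card [Fintype V] [DecidableEq V] [Fintype G.edgeSet] (u v : V) :
    edgeCloserCount G u v =
      #{e ∈ G.edgeFinset | vertexEdgeDist G u e < vertexEdgeDist G v e} := by
  rw [edgeCloserCount, ← Nat.card_eq_finsetCard]
  simp

lemma emostar_eq_sum [Fintype V] [Fintype G.edgeSet] :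
    emostar G = ∑ e ∈ G.edgeFinset, emostarTerm G e := by
  unfold emostar
  congr 1
  ext e
  simp

end SimpleGraph

open SimpleGraph

namespace Qgraph

variable {m n : ℕ}

instance : DecidableRel (Qgraph m n).Adj := fun _ _ => inferInstanceAs (Decidable (_ ∨ _))

def copyEdges (j : Fin m) : Finset (Sym2 (Fin m × Fin n)) :=
  ((⊤ : SimpleGraph (Fin n)).map (Function.Embedding.sectR j (Fin n))).edgeFinset

lemma mk_mem_copyEdges {j : Fin m} {x y : Fin m × Fin n} :
    s(x, y) ∈ copyEdges j ↔ x.1 = j ∧ y.1 = j ∧ x.2 ≠ y.2 := by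
  obtain ⟨x1, x2⟩ := x
  obtain ⟨y1, y2⟩ := y
  simp only [copyEdges, mem_edgeFinset, mem_edgeSet, map_adj, top_adj,
    Function.Embedding.sectR_apply, Prod.mk.injEq, ↓existsAndEq]
  grind

lemma card_copyEdges (j : Fin m) :
    #(copyEdges j : Finset (Sym2 (Fin m × Fin n))) = n.choose 2 := by
  calc #(copyEdges j) = #(⊤ : SimpleGraph (Fin n)).edgeFinset := by
        unfold copyEdges
        convert card_edgeFinset_map (Function.Embedding.sectR j (Fin n)) _
    _ = n.choose 2 := by rw [card_edgeFinset_top_eq_card_choose_two, Fintype.card_fin]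

lemma card_biUnion_copyEdges (s : Finset (Fin m)) :
    #(s.biUnion copyEdges : Finset (Sym2 (Fin m × Fin n))) = #s * n.choose 2 := by
  rw [card_biUnion fun j _ k _ hjk => disjoint_left.2 fun e hj hk => ?_,
    sum_const_nat fun j _ => card_copyEdges j]
  induction e using Sym2.ind with
  | _ x y => grind [mk_mem_copyEdges]

variable [NeZero n]

@[simp]
lemma adj_iff {p q : Fin m × Fin n} :
    (Qgraph m n).Adj p q ↔
      (p.1 = q.1 ∧ p.2 ≠ q.2) ∨ (p.2 = 0 ∧ q.2 = 0 ∧ p.1 ≠ q.1) := by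
  simp [Qgraph]

def hubDist (p : Fin m × Fin n) : ℕ := if p.2 = 0 then 0 else 1

def qdist (p q : Fin m × Fin n) : ℕ :=
  if p = q then 0 else if p.1 = q.1 then 1 else hubDist p + 1 + hubDist q

lemma qdist_le_of_adj {x y : Fin m × Fin n} (h : (Qgraph m n).Adj x y) (q : Fin m × Fin n) :
    qdist x q ≤ qdist y q + 1 := by
  rw [adj_iff] at h
  unfold qdist hubDist
  split_ifs <;> simp_all [Prod.ext_iff]

lemma exists_adj_qdist_lt {x q : Fin m × Fin n} (hxq : x ≠ q) :
    ∃ y, (Qgraph m n).Adj x y ∧ qdist y q < qdist x q := by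
  by_cases h1 : x.1 = q.1
  · refine ⟨q, Or.inl ⟨h1, fun h2 => hxq (Prod.ext h1 h2)⟩, ?_⟩
    simp [qdist, hxq, h1]
  by_cases hx : x.2 = 0
  · refine ⟨(q.1, 0), by simp [hx, h1], ?_⟩
    simp only [qdist, hubDist, hxq, h1, hx]
    split_ifs <;> simp_all [Prod.ext_iff]
  · refine ⟨(x.1, 0), by simp [hx], ?_⟩
    simp only [qdist, hubDist, hxq, h1, hx]
    split_ifs <;> simp_all [Prod.ext_iff]

lemma dist_eq (p q : Fin m × Fin n) : (Qgraph m n).dist p q = qdist p q :=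
  dist_eq_of_descent (qdist · q) (by simp [qdist]) (fun _ _ h => qdist_le_of_adj h q)
    (fun _ h => exists_adj_qdist_lt h) p

def hubEdges : Finset (Sym2 (Fin m × Fin n)) :=
  ((⊤ : SimpleGraph (Fin m)).map (Function.Embedding.sectL (Fin m) 0)).edgeFinset

lemma mk_mem_hubEdges {x y : Fin m × Fin n} :
    s(x, y) ∈ hubEdges ↔ x.2 = 0 ∧ y.2 = 0 ∧ x.1 ≠ y.1 := by
  obtain ⟨x1, x2⟩ := x
  obtain ⟨y1, y2⟩ := y
  simp only [hubEdges, mem_edgeFinset, mem_edgeSet, map_adj, top_adj,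
    Function.Embedding.sectL_apply, Prod.mk.injEq, ↓existsAndEq]
  grind

lemma card_hubEdges : #(hubEdges : Finset (Sym2 (Fin m × Fin n))) = m.choose 2 := by
  calc #hubEdges = #(⊤ : SimpleGraph (Fin m)).edgeFinset := by
        unfold hubEdges
        convert card_edgeFinset_map (Function.Embedding.sectL (Fin m) (0 : Fin n)) _
    _ = m.choose 2 := by rw [card_edgeFinset_top_eq_card_choose_two, Fintype.card_fin]

lemma filter_closer_leaf_hub (i : Fin m) {b : Fin n} (hb : b ≠ 0) :
    {e ∈ (Qgraph m n).edgeFinset |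
      vertexEdgeDist (Qgraph m n) (i, b) e < vertexEdgeDist (Qgraph m n) (i, 0) e} =
      Sym2.star (i, b) ({i} ×ˢ {0, b}ᶜ) := by
  ext e
  induction e using Sym2.ind with
  | _ x y =>
    obtain ⟨x1, x2⟩ := x
    obtain ⟨y1, y2⟩ := y
    simp only [mem_filter, mem_edgeFinset, mem_edgeSet, adj_iff, vertexEdgeDist, Sym2.lift_mk,
      dist_eq, qdist, hubDist, Sym2.mk_mem_star, mem_product, mem_singleton, mem_compl, mem_insert,
      Prod.mk.injEq, lt_inf_iff, inf_lt_iff]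
    grind

lemma filter_closer_hub_leaf (i : Fin m) {b : Fin n} (hb : b ≠ 0) :
    {e ∈ (Qgraph m n).edgeFinset |
      vertexEdgeDist (Qgraph m n) (i, 0) e < vertexEdgeDist (Qgraph m n) (i, b) e} =
      hubEdges ∪ (univ.erase i).biUnion copyEdges ∪ Sym2.star (i, 0) ({i} ×ˢ {0, b}ᶜ) := by
  ext e
  induction e using Sym2.ind with
  | _ x y =>
    obtain ⟨x1, x2⟩ := x
    obtain ⟨y1, y2⟩ := y
    simp only [mem_filter, mem_edgeFinset, mem_edgeSet, adj_iff, vertexEdgeDist, Sym2.lift_mk,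
      dist_eq, qdist, hubDist, mem_union, mk_mem_hubEdges, mem_biUnion, mem_erase, mem_univ,
      mk_mem_copyEdges, ↓existsAndEq, Sym2.mk_mem_star, mem_product, mem_singleton, mem_compl,
      mem_insert, Prod.mk.injEq, lt_inf_iff, inf_lt_iff]
    grind

lemma edgeCloserCount_leaf_hub (i : Fin m) {b : Fin n} (hb : b ≠ 0) :
    edgeCloserCount (Qgraph m n) (i, b) (i, 0) = n - 2 := by
  rw [edgeCloserCount_eq_card, filter_closer_leaf_hub i hb, Sym2.card_star, card_product,
    card_singleton, card_compl, card_pair hb.symm, Fintype.card_fin, one_mul]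

lemma edgeCloserCount_hub_leaf (i : Fin m) {b : Fin n} (hb : b ≠ 0) :
    edgeCloserCount (Qgraph m n) (i, 0) (i, b) =
      m.choose 2 + (m - 1) * n.choose 2 + (n - 2) := by
  have hAB : Disjoint (hubEdges : Finset (Sym2 (Fin m × Fin n)))
      ((univ.erase i).biUnion copyEdges) := by
    refine disjoint_left.2 fun e hA hB => ?_
    induction e using Sym2.ind with
    | _ x y => simp only [mem_biUnion] at hB; grind [mk_mem_hubEdges, mk_mem_copyEdges]
  have hABC : Disjoint (hubEdges ∪ (univ.erase i).biUnion copyEdges)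
      (Sym2.star ((i, 0) : Fin m × Fin n) ({i} ×ˢ {0, b}ᶜ)) := by
    refine disjoint_left.2 fun e hAB hC => ?_
    induction e using Sym2.ind with
    | _ x y =>
      simp only [mem_union, mem_biUnion, mem_erase, Sym2.mk_mem_star, mem_product] at hAB hC
      grind [mk_mem_hubEdges, mk_mem_copyEdges]
  rw [edgeCloserCount_eq_card, filter_closer_hub_leaf i hb, card_union_of_disjoint hABC,
    card_union_of_disjoint hAB, card_hubEdges, card_biUnion_copyEdges, Sym2.card_star,
    card_product, card_singleton, card_compl, card_pair hb.symm, card_erase_of_mem (mem_univ i),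
    card_univ, Fintype.card_fin, Fintype.card_fin, one_mul]

lemma emostarTerm_hub_leaf (i : Fin m) {b : Fin n} (hb : b ≠ 0) :
    emostarTerm (Qgraph m n) s((i, 0), (i, b)) = m.choose 2 + (m - 1) * n.choose 2 := by
  simp only [emostarTerm, Sym2.lift_mk, edgeCloserCount_hub_leaf i hb,
    edgeCloserCount_leaf_hub i hb]
  omega

def autProdCongr (τ : Equiv.Perm (Fin m)) (σ : Equiv.Perm (Fin n)) (hσ : σ 0 = 0) :
    Qgraph m n ≃g Qgraph m n where
  toEquiv := τ.prodCongr σ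
  map_rel_iff' := by
    have h0 : ∀ c, σ c = 0 ↔ c = 0 := fun c => σ.injective.eq_iff' hσ
    simp [h0, τ.injective.eq_iff, σ.injective.eq_iff]

lemma emostarTerm_hub_hub (i j : Fin m) : emostarTerm (Qgraph m n) s((i, 0), (j, 0)) = 0 :=
  emostarTerm_eq_zero_of_iso_swap (autProdCongr (Equiv.swap i j) 1 rfl) (by simp [autProdCongr])
    (by simp [autProdCongr])

lemma emostarTerm_leaf_leaf (i : Fin m) {b c : Fin n} (hb : b ≠ 0) (hc : c ≠ 0) :
    emostarTerm (Qgraph m n) s((i, b), (i, c)) = 0 :=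
  emostarTerm_eq_zero_of_iso_swap
    (autProdCongr 1 (Equiv.swap b c) (Equiv.swap_apply_of_ne_of_ne hb.symm hc.symm))
    (by simp [autProdCongr]) (by simp [autProdCongr])

def spokes : Finset (Sym2 (Fin m × Fin n)) :=
  univ.biUnion fun i => Sym2.star (i, 0) ({i} ×ˢ {0}ᶜ)

lemma card_spokes : #(spokes : Finset (Sym2 (Fin m × Fin n))) = m * (n - 1) := by
  rw [spokes, card_biUnion fun i _ j _ hij => disjoint_left.2 fun e hi hj => ?_]
  · simp [Sym2.card_star, card_compl]
  induction e using Sym2.ind with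
  | _ x y => simp only [Sym2.mk_mem_star, mem_product, mem_singleton] at hi hj; grind

lemma spokes_subset_edgeFinset : spokes ⊆ (Qgraph m n).edgeFinset := by
  intro e he
  induction e using Sym2.ind with
  | _ x y =>
    simp only [spokes, mem_biUnion, Sym2.mk_mem_star, mem_product, mem_singleton,
      mem_compl] at he
    simp only [mem_edgeFinset, mem_edgeSet, adj_iff]
    grind

lemma emostarTerm_of_mem_spokes {e : Sym2 (Fin m × Fin n)} (he : e ∈ spokes) :
    emostarTerm (Qgraph m n) e = m.choose 2 + (m - 1) * n.choose 2 := by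
  simp only [spokes, mem_biUnion, mem_univ, true_and, Sym2.star, mem_image, mem_product,
    mem_singleton, mem_compl] at he
  obtain ⟨i, ⟨j, b⟩, ⟨rfl, hb⟩, rfl⟩ := he
  exact emostarTerm_hub_leaf j (by simpa using hb)

lemma emostarTerm_eq_zero_of_notMem_spokes {e : Sym2 (Fin m × Fin n)}
    (he : e ∈ (Qgraph m n).edgeFinset) (hs : e ∉ spokes) : emostarTerm (Qgraph m n) e = 0 := by
  induction e using Sym2.ind with
  | _ x y =>
    obtain ⟨x1, x2⟩ := x
    obtain ⟨y1, y2⟩ := y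
    simp only [spokes, mem_biUnion, Sym2.mk_mem_star, mem_product, mem_univ, mem_singleton,
      mem_compl, Prod.mk.injEq, true_and, not_exists, not_or] at hs
    simp only [mem_edgeFinset, mem_edgeSet, adj_iff] at he
    rcases he with ⟨rfl, hxy⟩ | ⟨rfl, rfl, -⟩
    · exact emostarTerm_leaf_leaf x1 (by grind) (by grind)
    · exact emostarTerm_hub_hub x1 y1

end Qgraph

lemma Nat.choose_two_mul_two (k : ℕ) : k.choose 2 * 2 = k * (k - 1) := by
  cases k with
  | zero => rfl
  | succ k => simpa using (Nat.add_one_mul_choose_eq k 1).symm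

theorem emostar_Qgraph_general (m n : ℕ) (hn : 2 ≤ n) :
    emostar (Qgraph m n) = m * (n - 1) * (m - 1) * (n ^ 2 - n + m) / 2 := by
  have : NeZero n := ⟨by omega⟩
  rw [emostar_eq_sum, ← sum_subset Qgraph.spokes_subset_edgeFinset
      fun _ => Qgraph.emostarTerm_eq_zero_of_notMem_spokes,
    sum_congr rfl fun _ => Qgraph.emostarTerm_of_mem_spokes, sum_const, Qgraph.card_spokes,
    smul_eq_mul]
  symm
  apply Nat.div_eq_of_eq_mul_left two_pos
  rw [sq, ← Nat.mul_sub_one]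
  calc m * (n - 1) * (m - 1) * (n * (n - 1) + m)
      = m * (n - 1) * (m * (m - 1) + (m - 1) * (n * (n - 1))) := by ring
    _ = _ := by rw [← Nat.choose_two_mul_two, ← Nat.choose_two_mul_two]; ring

theorem emostar_Qgraph (m n : ℕ) (hm : 1 ≤ m) (hn : 2 ≤ n) :
    emostar (Qgraph m n) = m * (n - 1) * (m - 1) * (n ^ 2 - n + m) / 2 :=
  emostar_Qgraph_general m n hn
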